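/- arXiv:1011.4328 — 6 statements merged into one kernel-verified Lean document; each statement's English description precedes it below -/
import Mathlib

section
/- Let (x*, r*) ∈ ℝⁿ × ℝᵐ be a fixed point of the AMP iteration with fixed parameters θ > 0 and b ∈ ℝ, b ≠ 1: that is, x* = η(x* + Aᵀr*; θ) (applied componentwise) and r* = y − Ax* + b·r*. Then x* is a stationary point (minimizer) of the LASSO cost function C(z) = (1/2)‖y − Az‖₂² + λ‖z‖₁ with λ = θ(1−b); i.e., there exists v ∈ ∂‖x*‖₁ such that Aᵀ(y − Ax*) = λ v. -/
/-- Soft thresholding function η(y;θ) = sign(y)·max(|y|−θ, 0). -/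
noncomputable def softThr (y θ : ℝ) : ℝ := Real.sign y * max (|y| - θ) 0

lemma softThr_fixed_pos {x u θ : ℝ} (hθ : 0 < θ) (h : x = softThr (x + u) θ)
    (hx : 0 < x) : u = θ := by
  unfold softThr at h
  have hsum : 0 < x + u := by
    by_contra hle
    push_neg at hle
    have hs : Real.sign (x + u) ≤ 0 := by
      rcases lt_or_eq_of_le hle with h1 | h1
      · simp [Real.sign_of_neg h1]
      · simp [h1]
    nlinarith [le_max_right (|x + u| - θ) (0:ℝ),
      mul_nonpos_of_nonpos_of_nonneg hs (le_max_right (|x + u| - θ) (0:ℝ))]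
  rw [Real.sign_of_pos hsum, abs_of_pos hsum, one_mul] at h
  rcases max_cases (x + u - θ) (0:ℝ) with ⟨he, _⟩ | ⟨he, _⟩ <;> rw [he] at h <;> linarith

lemma softThr_fixed_neg {x u θ : ℝ} (hθ : 0 < θ) (h : x = softThr (x + u) θ)
    (hx : x < 0) : u = -θ := by
  unfold softThr at h
  have hsum : x + u < 0 := by
    by_contra hle
    push_neg at hle
    have hs : 0 ≤ Real.sign (x + u) := by
      rcases lt_or_eq_of_le hle with h1 | h1
      · simp [Real.sign_of_pos h1]
      · simp [← h1]
    nlinarith [le_max_right (|x + u| - θ) (0:ℝ),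
      mul_nonneg hs (le_max_right (|x + u| - θ) (0:ℝ))]
  rw [Real.sign_of_neg hsum, abs_of_neg hsum] at h
  rcases max_cases (-(x + u) - θ) (0:ℝ) with ⟨he, _⟩ | ⟨he, _⟩ <;> rw [he] at h <;> linarith

lemma softThr_fixed_zero {u θ : ℝ} (hθ : 0 < θ) (h : (0:ℝ) = softThr (0 + u) θ) :
    |u| ≤ θ := by
  unfold softThr at h
  rw [zero_add] at h
  by_contra habs
  push_neg at habs
  have hne : u ≠ 0 := by
    intro h0; rw [h0] at habs; simp at habs; linarith
  have hmax : max (|u| - θ) 0 = |u| - θ := max_eq_left (by linarith)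
  rw [hmax] at h
  rcases lt_trichotomy u 0 with h1 | h1 | h1
  · rw [Real.sign_of_neg h1] at h; nlinarith [abs_pos.mpr hne]
  · exact hne h1
  · rw [Real.sign_of_pos h1] at h; nlinarith [abs_pos.mpr hne]

/-- A fixed point (x*, r*) of the AMP iteration with fixed parameters θ > 0, b ≠ 1,
is a stationary point of the LASSO cost with λ = θ(1−b): there is a subgradient
v ∈ ∂‖x*‖₁ with Aᵀ(y − Ax*) = λ v. -/
theorem amp_fixed_point_is_lasso_stationary {m n : ℕ}
    (A : Matrix (Fin m) (Fin n) ℝ) (y : Fin m → ℝ)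
    (θ b : ℝ) (hθ : 0 < θ) (hb : b ≠ 1)
    (xs : Fin n → ℝ) (rs : Fin m → ℝ)
    (hx : ∀ i, xs i = softThr (xs i + A.transpose.mulVec rs i) θ)
    (hr : ∀ a, rs a = y a - A.mulVec xs a + b * rs a) :
    ∃ v : Fin n → ℝ,
      (∀ i, xs i ≠ 0 → v i = Real.sign (xs i)) ∧
      (∀ i, xs i = 0 → v i ∈ Set.Icc (-1 : ℝ) 1) ∧
      A.transpose.mulVec (y - A.mulVec xs) = (θ * (1 - b)) • v := by
  set u : Fin n → ℝ := A.transpose.mulVec rs with hu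
  refine ⟨fun i => u i / θ, ?_, ?_, ?_⟩
  · intro i hne
    show u i / θ = _
    rcases lt_trichotomy (xs i) 0 with h1 | h1 | h1
    · rw [softThr_fixed_neg hθ (hx i) h1, Real.sign_of_neg h1]
      field_simp
    · exact absurd h1 hne
    · rw [softThr_fixed_pos hθ (hx i) h1, Real.sign_of_pos h1]
      field_simp
  · intro i h0
    have := softThr_fixed_zero hθ (h0 ▸ hx i)
    have h1 : |u i / θ| ≤ 1 := by
      rw [abs_div, abs_of_pos hθ, div_le_one hθ]; exact this
    rw [abs_le] at h1
    exact ⟨h1.1, h1.2⟩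
  · have hyAx : y - A.mulVec xs = (1 - b) • rs := by
      funext a
      have := hr a
      simp only [Pi.sub_apply, Pi.smul_apply, smul_eq_mul]
      linarith
    rw [hyAx, Matrix.mulVec_smul]
    funext i
    simp only [Pi.smul_apply, smul_eq_mul, ← hu]
    field_simp
end

section
/- For Z a standard Gaussian random variable and θ ≥ 0, the mean square error of soft thresholding at zero signal equals E[η(σZ;θ)²] = σ²·[2(1+α²)Φ(−α) − 2αφ(α)] where θ = ασ, φ is the standard Gaussian density and Φ the standard Gaussian CDF. -/
open MeasureTheory ProbabilityTheory

/-- Standard Gaussian density φ. -/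
noncomputable def stdGaussPDF (z : ℝ) : ℝ := Real.exp (-z^2/2) / Real.sqrt (2*Real.pi)

/-- Standard Gaussian CDF Φ. -/
noncomputable def stdGaussCDF (z : ℝ) : ℝ := ∫ u in Set.Iic z, stdGaussPDF u

section Aux

open Set Filter Real Topology

lemma stdGaussPDF_eq (z : ℝ) :
    stdGaussPDF z = Real.exp (-(1/2) * z^2) / Real.sqrt (2*Real.pi) := by
  unfold stdGaussPDF; ring_nf

lemma continuous_stdGaussPDF : Continuous stdGaussPDF := by
  unfold stdGaussPDF; fun_prop

lemma stdGaussPDF_nonneg (z : ℝ) : 0 ≤ stdGaussPDF z := by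
  unfold stdGaussPDF; positivity

lemma stdGaussPDF_even (z : ℝ) : stdGaussPDF (-z) = stdGaussPDF z := by
  unfold stdGaussPDF; ring_nf

lemma integrable_stdGaussPDF : Integrable stdGaussPDF := by
  have h := (integrable_exp_neg_mul_sq (by norm_num : (0:ℝ) < 1/2)).div_const
    (Real.sqrt (2*Real.pi))
  exact h.congr (Filter.Eventually.of_forall fun z => (stdGaussPDF_eq z).symm)

lemma integral_stdGaussPDF : ∫ z, stdGaussPDF z = 1 := by
  have h : ∫ z : ℝ, Real.exp (-(1/2) * z^2) = Real.sqrt (2*Real.pi) := by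
    rw [integral_gaussian]
    rw [show π / (1/2) = 2*π by ring]
  have h2 : ∫ z, stdGaussPDF z = (∫ z : ℝ, Real.exp (-(1/2) * z^2)) / Real.sqrt (2*Real.pi) := by
    rw [← integral_div]
    exact integral_congr_ae (Filter.Eventually.of_forall fun z => stdGaussPDF_eq z)
  rw [h2, h, div_self]
  positivity

lemma integrable_sq_stdGaussPDF : Integrable (fun z : ℝ => z^2 * stdGaussPDF z) := by
  have h := (integrable_rpow_mul_exp_neg_mul_sq (by norm_num : (0:ℝ) < 1/2)
    (by norm_num : (-1:ℝ) < 2)).div_const (Real.sqrt (2*Real.pi))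
  simp only [show ((2:ℝ)) = ((2:ℕ):ℝ) from by norm_num, Real.rpow_natCast] at h
  refine h.congr (Filter.Eventually.of_forall fun z => ?_)
  simp only [stdGaussPDF_eq]
  push_cast
  ring

lemma stdGaussCDF_eq (x : ℝ) :
    stdGaussCDF x = stdGaussCDF 0 + ∫ u in (0:ℝ)..x, stdGaussPDF u := by
  have h := intervalIntegral.integral_Iic_sub_Iic
    (integrable_stdGaussPDF.integrableOn (s := Iic 0))
    (integrable_stdGaussPDF.integrableOn (s := Iic x)) (μ := volume)
  unfold stdGaussCDF
  linarith [h]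

lemma hasDerivAt_stdGaussCDF (x : ℝ) : HasDerivAt stdGaussCDF (stdGaussPDF x) x := by
  have h := (continuous_stdGaussPDF.integral_hasStrictDerivAt 0 x).hasDerivAt
  have h2 : HasDerivAt (fun u => stdGaussCDF 0 + ∫ t in (0:ℝ)..u, stdGaussPDF t)
      (stdGaussPDF x) x := h.const_add _
  exact h2.congr_of_eventuallyEq (Filter.Eventually.of_forall fun y => stdGaussCDF_eq y)

lemma tendsto_stdGaussCDF_atTop : Tendsto stdGaussCDF atTop (𝓝 1) := by
  have hc : AECover (volume : Measure ℝ) atTop (fun x : ℝ => Iic x) :=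
    aecover_Iic tendsto_id
  have h := hc.integral_tendsto_of_countably_generated integrable_stdGaussPDF
  rwa [integral_stdGaussPDF] at h

lemma stdGaussCDF_neg (x : ℝ) : stdGaussCDF (-x) = 1 - stdGaussCDF x := by
  have h1 : stdGaussCDF x + ∫ u in Ioi x, stdGaussPDF u = 1 := by
    have := integral_add_compl (measurableSet_Iic (a := x)) integrable_stdGaussPDF
    rw [compl_Iic] at this
    rw [← integral_stdGaussPDF]
    exact this
  have h2 : stdGaussCDF (-x) = ∫ u in Ioi x, stdGaussPDF u := by
    unfold stdGaussCDF
    rw [show Ioi x = Ioi (- -x) by simp, ← integral_comp_neg_Iic]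
    exact integral_congr_ae (Filter.Eventually.of_forall fun u => (stdGaussPDF_even u).symm)
  linarith

lemma hasDerivAt_stdGaussPDF (x : ℝ) :
    HasDerivAt stdGaussPDF (-x * stdGaussPDF x) x := by
  have h1 : HasDerivAt (fun z : ℝ => -z^2/2) (-x) x := by
    have := ((hasDerivAt_pow 2 x).neg).div_const 2
    simpa using this.congr_deriv (by push_cast; ring)
  have h2 := (h1.exp).div_const (Real.sqrt (2*Real.pi))
  refine h2.congr_deriv ?_
  unfold stdGaussPDF
  ring

lemma integrableOn_key {α : ℝ} (hα : 0 ≤ α) :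
    IntegrableOn (fun z : ℝ => (z - α)^2 * stdGaussPDF z) (Ioi α) := by
  refine Integrable.mono' (integrable_sq_stdGaussPDF.integrableOn (s := Ioi α))
    (Continuous.aestronglyMeasurable (by unfold stdGaussPDF; fun_prop)) ?_
  filter_upwards [ae_restrict_mem measurableSet_Ioi] with z hz
  have hz' : α < z := hz
  rw [Real.norm_eq_abs, abs_mul, abs_of_nonneg (stdGaussPDF_nonneg z),
    abs_of_nonneg (by positivity : (0:ℝ) ≤ (z - α)^2)]
  have hle : (z-α)^2 ≤ z^2 := by nlinarith
  exact mul_le_mul_of_nonneg_right hle (stdGaussPDF_nonneg z)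

lemma key_integral {α : ℝ} (hα : 0 ≤ α) :
    ∫ z in Ioi α, (z - α)^2 * stdGaussPDF z
      = (1 + α^2) * (1 - stdGaussCDF α) - α * stdGaussPDF α := by
  set G : ℝ → ℝ := fun z => (2*α - z) * stdGaussPDF z + (1+α^2) * stdGaussCDF z with hGdef
  have hderiv : ∀ x ∈ Ici α, HasDerivAt G ((x - α)^2 * stdGaussPDF x) x := by
    intro x _
    have h1 : HasDerivAt (fun z : ℝ => 2*α - z) (-1) x := (hasDerivAt_id x).const_sub (2*α)
    have h2 := h1.mul (hasDerivAt_stdGaussPDF x)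
    have h3 := (hasDerivAt_stdGaussCDF x).const_mul (1+α^2)
    refine (h2.add h3).congr_deriv ?_
    ring
  have htend : Tendsto G atTop (𝓝 (1 + α^2)) := by
    have hzexp : Tendsto (fun x : ℝ => x * Real.exp (-(1/2) * x^2)) atTop (𝓝 0) := by
      have h := rpow_mul_exp_neg_mul_sq_isLittleO_exp_neg (by norm_num : (0:ℝ) < 1/2) 1
      simp only [Real.rpow_one] at h
      refine h.tendsto_zero_of_tendsto (y := (0:ℝ)) ?_
      have h2 : Tendsto (fun x : ℝ => -(1/2) * x) atTop atBot :=
        Filter.Tendsto.const_mul_atTop_of_neg (by norm_num : (-(1/2):ℝ) < 0) tendsto_id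
      exact Real.tendsto_exp_atBot.comp h2
    have hexp : Tendsto (fun x : ℝ => Real.exp (-(1/2) * x^2)) atTop (𝓝 0) := by
      refine Real.tendsto_exp_atBot.comp ?_
      exact Filter.Tendsto.const_mul_atTop_of_neg (by norm_num : (-(1/2):ℝ) < 0)
        (tendsto_pow_atTop (by norm_num))
    have hφ : Tendsto stdGaussPDF atTop (𝓝 0) := by
      have := hexp.div_const (Real.sqrt (2*Real.pi))
      rw [zero_div] at this
      exact this.congr fun z => (stdGaussPDF_eq z).symm
    have hzφ : Tendsto (fun x : ℝ => x * stdGaussPDF x) atTop (𝓝 0) := by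
      have := hzexp.div_const (Real.sqrt (2*Real.pi))
      rw [zero_div] at this
      refine this.congr fun z => ?_
      rw [stdGaussPDF_eq]; ring
    have h1 : Tendsto (fun x : ℝ => (2*α - x) * stdGaussPDF x) atTop (𝓝 0) := by
      have := ((hφ.const_mul (2*α)).sub hzφ)
      rw [mul_zero, sub_zero] at this
      refine this.congr fun z => ?_
      ring
    have h2 := tendsto_stdGaussCDF_atTop.const_mul (1+α^2)
    rw [mul_one] at h2
    have := h1.add h2
    rw [zero_add] at this
    exact this
  have hint := integrableOn_key hα
  have h := integral_Ioi_of_hasDerivAt_of_tendsto' hderiv hint htend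
  rw [h, hGdef]
  simp only
  ring

lemma softThr_sq (y θ : ℝ) (hθ : 0 ≤ θ) : (softThr y θ)^2 = (max (|y| - θ) 0)^2 := by
  unfold softThr
  rcases lt_trichotomy y 0 with h|h|h
  · rw [Real.sign_of_neg h]; ring
  · subst h
    rw [Real.sign_zero, abs_zero, zero_sub, max_eq_right (neg_nonpos.mpr hθ)]
    ring
  · rw [Real.sign_of_pos h]; ring

lemma gaussianPDFReal_zero_one (z : ℝ) : gaussianPDFReal 0 1 z = stdGaussPDF z := by
  unfold gaussianPDFReal stdGaussPDF
  push_cast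
  rw [mul_one, sub_zero, mul_one]
  rw [div_eq_inv_mul]
  ring_nf

end Aux

/-- MSE of soft thresholding at zero signal:
E[η(σZ;ασ)²] = σ²·[2(1+α²)Φ(−α) − 2αφ(α)]. -/
theorem soft_thresholding_mse_at_zero (σ α : ℝ) (hσ : 0 < σ) (hα : 0 ≤ α) :
    ∫ z, (softThr (σ * z) (α * σ))^2 ∂(gaussianReal 0 1) =
      σ^2 * (2*(1+α^2) * stdGaussCDF (-α) - 2*α * stdGaussPDF α) := by
  open Set Filter Real in
  have hmeas : (gaussianReal 0 1 : Measure ℝ)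
      = volume.withDensity (fun x => ((gaussianPDFReal 0 1 x).toNNReal : ENNReal)) := by
    rw [gaussianReal_of_var_ne_zero 0 one_ne_zero]; rfl
  rw [hmeas, integral_withDensity_eq_integral_smul
    ((measurable_gaussianPDFReal 0 1).real_toNNReal)]
  have hpt : (fun z : ℝ => (gaussianPDFReal 0 1 z).toNNReal • (softThr (σ*z) (α*σ))^2)
      = fun z : ℝ => σ^2 * ((max (z-α) 0)^2 * stdGaussPDF z
          + (max (-z-α) 0)^2 * stdGaussPDF z) := by
    funext z
    rw [NNReal.smul_def, Real.coe_toNNReal _ (gaussianPDFReal_nonneg 0 1 z),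
      gaussianPDFReal_zero_one, softThr_sq _ _ (by positivity)]
    have habs : |σ * z| - α * σ = σ * (|z| - α) := by
      rw [abs_mul, abs_of_pos hσ]; ring
    have hmax : max (|σ * z| - α * σ) 0 = σ * max (|z| - α) 0 := by
      rw [habs, mul_max_of_nonneg _ _ hσ.le, mul_zero]
    have hsplit : (max (|z| - α) 0)^2 = (max (z-α) 0)^2 + (max (-z-α) 0)^2 := by
      rcases le_or_gt 0 z with hz|hz
      · rw [abs_of_nonneg hz, max_eq_right (by linarith : -z - α ≤ 0)]; ring
      · rw [abs_of_neg hz, max_eq_right (by linarith : z - α ≤ 0)]; ring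
    rw [hmax, mul_pow, hsplit, smul_eq_mul]
    ring
  rw [hpt]
  have hgint : Integrable (fun z : ℝ => (max (z-α) 0)^2 * stdGaussPDF z) := by
    refine Integrable.mono' integrable_sq_stdGaussPDF
      (Continuous.aestronglyMeasurable (by unfold stdGaussPDF; fun_prop)) ?_
    refine Filter.Eventually.of_forall fun z => ?_
    rw [Real.norm_eq_abs, abs_mul, abs_of_nonneg (stdGaussPDF_nonneg z),
      abs_of_nonneg (sq_nonneg _)]
    have hle : (max (z-α) 0)^2 ≤ z^2 := by
      rcases le_or_gt z α with h|h
      · rw [max_eq_right (by linarith)]; nlinarith [sq_nonneg z]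
      · rw [max_eq_left (by linarith)]; nlinarith
    exact mul_le_mul_of_nonneg_right hle (stdGaussPDF_nonneg z)
  have hgneg : Integrable (fun z : ℝ => (max (-z-α) 0)^2 * stdGaussPDF z) := by
    refine Integrable.mono' integrable_sq_stdGaussPDF
      (Continuous.aestronglyMeasurable (by unfold stdGaussPDF; fun_prop)) ?_
    refine Filter.Eventually.of_forall fun z => ?_
    rw [Real.norm_eq_abs, abs_mul, abs_of_nonneg (stdGaussPDF_nonneg z),
      abs_of_nonneg (sq_nonneg _)]
    have hle : (max (-z-α) 0)^2 ≤ z^2 := by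
      rcases le_or_gt (-z) α with h|h
      · rw [max_eq_right (by linarith)]; nlinarith [sq_nonneg z]
      · rw [max_eq_left (by linarith)]; nlinarith
    exact mul_le_mul_of_nonneg_right hle (stdGaussPDF_nonneg z)
  rw [integral_const_mul, integral_add hgint hgneg]
  have hneg : ∫ z : ℝ, (max (-z-α) 0)^2 * stdGaussPDF z
      = ∫ z : ℝ, (max (z-α) 0)^2 * stdGaussPDF z := by
    rw [← integral_neg_eq_self (fun z : ℝ => (max (z-α) 0)^2 * stdGaussPDF z) volume]
    refine integral_congr_ae (Filter.Eventually.of_forall fun z => ?_)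
    simp only [stdGaussPDF_even]
  rw [hneg]
  have hsplit2 : ∫ z : ℝ, (max (z-α) 0)^2 * stdGaussPDF z
      = ∫ z in Set.Ioi α, (z-α)^2 * stdGaussPDF z := by
    rw [← integral_add_compl (measurableSet_Ioi (a := α)) hgint, Set.compl_Ioi]
    have h0 : ∫ z in Set.Iic α, (max (z-α) 0)^2 * stdGaussPDF z = 0 := by
      refine setIntegral_eq_zero_of_forall_eq_zero fun z hz => ?_
      rw [max_eq_right (by linarith [Set.mem_Iic.mp hz] : z - α ≤ 0)]
      ring
    rw [h0, add_zero]
    refine setIntegral_congr_fun measurableSet_Ioi fun z hz => ?_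
    rw [max_eq_left (by linarith [Set.mem_Ioi.mp hz] : (0:ℝ) ≤ z - α)]
  rw [hsplit2, key_integral hα, stdGaussCDF_neg]
  ring
end

section
/- For any α ≥ 0 and any real x₀, the function x₀ ↦ E[(η(x₀ + Z; α) − x₀)²] with Z ∼ N(0,1) is bounded above by 1 + α², and this bound is approached as |x₀| → ∞. -/
open MeasureTheory ProbabilityTheory Real Filter

lemma softThr_eq {α : ℝ} (hα : 0 ≤ α) (y : ℝ) :
    softThr y α = if α < y then y - α else if y < -α then y + α else 0 := by
  unfold softThr Real.sign
  rcases lt_trichotomy y 0 with h | h | h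
  · rw [if_pos h, abs_of_neg h, if_neg (by linarith)]
    by_cases h2 : y < -α
    · rw [if_pos h2, max_eq_left (by linarith)]; ring
    · rw [if_neg h2, max_eq_right (by push_neg at h2; linarith)]; ring
  · subst h
    simp [hα, not_lt.2 hα]
  · rw [if_neg (by linarith), if_pos h, abs_of_pos h]
    by_cases h1 : α < y
    · rw [if_pos h1, max_eq_left (by linarith)]; ring
    · rw [if_neg h1, if_neg (by linarith), max_eq_right (by push_neg at h1; linarith)]; ring

lemma key_ineq {α : ℝ} (hα : 0 ≤ α) (x z : ℝ) :
    (softThr (x + z) α - x)^2 + (softThr (x - z) α - x)^2 ≤ 2 * (z^2 + α^2) := by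
  rw [softThr_eq hα, softThr_eq hα]
  split_ifs <;> nlinarith [sq_nonneg (z - α), sq_nonneg (z + α), sq_nonneg x, sq_nonneg (x - z), sq_nonneg (x + z), sq_nonneg (x - α), sq_nonneg (x + α)]

lemma abs_softThr_sub (α y x : ℝ) (hα : 0 ≤ α) : |softThr y α - x| ≤ |y - x| + α := by
  rw [softThr_eq hα]
  split_ifs <;> cases abs_cases (y - x) <;> cases abs_cases (softThr y α - x) <;>
    first | (rw [abs_le]; constructor <;> linarith) | (rw [abs_le]; constructor <;> nlinarith)

lemma sqrt_two_pi : √(2*π) = √2 * √π := Real.sqrt_mul (by norm_num) _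

lemma int_exp : ∫ x : ℝ, rexp (-x^2/2) = √(2*π) := by
  have h : ∀ x : ℝ, rexp (-x^2/2) = rexp (-(1/2) * x^2) := fun x => by ring_nf
  simp_rw [h, integral_gaussian, sqrt_two_pi]
  rw [show π / (1/2) = π * 2 by ring, Real.sqrt_mul pi_pos.le]
  ring

lemma integrable_exp2 : Integrable (fun x : ℝ => rexp (-x^2/2)) := by
  have h : ∀ x : ℝ, rexp (-x^2/2) = rexp (-(1/2) * x^2) := fun x => by ring_nf
  simp_rw [h]
  exact integrable_exp_neg_mul_sq (by norm_num)

lemma integrable_sq_exp : Integrable (fun x : ℝ => x^2 * rexp (-x^2/2)) := by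
  have h : ∀ x : ℝ, x^2 * rexp (-x^2/2) = x ^ ((2:ℕ):ℝ) * rexp (-(1/2) * x^2) := fun x => by
    rw [Real.rpow_natCast]; ring_nf
  simp_rw [h]
  exact integrable_rpow_mul_exp_neg_mul_sq (by norm_num) (by norm_num)

lemma gamma32 : Real.Gamma (3/2) = √π / 2 := by
  rw [show (3/2 : ℝ) = 1/2 + 1 by norm_num, Real.Gamma_add_one (by norm_num),
    Real.Gamma_one_half_eq]
  ring

lemma rpow_half : (2:ℝ) ^ ((3:ℝ)/2) = 2 * √2 := by
  rw [show (3:ℝ)/2 = 1 + 1/2 by norm_num, Real.rpow_add (by norm_num), Real.rpow_one,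
    ← Real.sqrt_eq_rpow]

lemma int_sq_exp : ∫ x : ℝ, x^2 * rexp (-x^2/2) = √(2*π) := by
  have habs : ∀ x : ℝ, (fun t : ℝ => t^2 * rexp (-t^2/2)) |x| = x^2 * rexp (-x^2/2) := by
    intro x; simp [sq_abs]
  calc ∫ x : ℝ, x^2 * rexp (-x^2/2)
      = ∫ x : ℝ, (fun t : ℝ => t^2 * rexp (-t^2/2)) |x| := by simp_rw [habs]
    _ = 2 * ∫ x in Set.Ioi (0:ℝ), x^2 * rexp (-x^2/2) := integral_comp_abs (f := fun t : ℝ => t^2 * rexp (-t^2/2))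
    _ = √(2*π) := by
        have h : ∫ x in Set.Ioi (0:ℝ), x^2 * rexp (-x^2/2)
            = ∫ x in Set.Ioi (0:ℝ), x ^ (2:ℝ) * rexp (-(1/2) * x ^ (2:ℝ)) := by
          refine setIntegral_congr_fun measurableSet_Ioi (fun x hx => ?_)
          rw [Real.rpow_two]
          ring_nf
        rw [h, integral_rpow_mul_exp_neg_mul_rpow (by norm_num) (by norm_num) (by norm_num)]
        rw [show -((2:ℝ)+1)/2 = -(3/2) by norm_num, show ((2:ℝ)+1)/2 = 3/2 by norm_num]
        rw [Real.rpow_neg (by norm_num), show (1/2:ℝ) = 2⁻¹ by norm_num,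
          Real.inv_rpow (by norm_num), inv_inv, rpow_half, gamma32, sqrt_two_pi]
        ring

lemma int_id_exp : ∫ x : ℝ, x * rexp (-x^2/2) = 0 := by
  have h := MeasureTheory.integral_neg_eq_self (fun x : ℝ => x * rexp (-x^2/2)) volume
  simp only [neg_sq, neg_mul] at h
  rw [MeasureTheory.integral_neg] at h
  linarith

lemma pdf_eq (z : ℝ) : gaussianPDFReal 0 1 z = (√(2*π))⁻¹ * rexp (-z^2/2) := by
  simp [gaussianPDFReal]

lemma pdf_nonneg (z : ℝ) : 0 ≤ gaussianPDFReal 0 1 z := (gaussianPDFReal_pos 0 1 z one_ne_zero).le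

lemma gauss_eq : gaussianReal 0 1 =
    volume.withDensity (fun z => ((gaussianPDFReal 0 1 z).toNNReal : ENNReal)) := by
  rw [gaussianReal_of_var_ne_zero 0 one_ne_zero]
  rfl

lemma integral_gauss (f : ℝ → ℝ) :
    ∫ z, f z ∂(gaussianReal 0 1) = ∫ z, (√(2*π))⁻¹ * rexp (-z^2/2) * f z := by
  rw [gauss_eq, integral_withDensity_eq_integral_smul
    ((measurable_gaussianPDFReal 0 1).real_toNNReal)]
  congr 1
  ext z
  rw [NNReal.smul_def, Real.coe_toNNReal _ (pdf_nonneg z), pdf_eq, smul_eq_mul]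

lemma integrable_gauss_iff (f : ℝ → ℝ) :
    Integrable f (gaussianReal 0 1) ↔
      Integrable (fun z => (√(2*π))⁻¹ * rexp (-z^2/2) * f z) volume := by
  rw [gauss_eq, integrable_withDensity_iff_integrable_smul
    ((measurable_gaussianPDFReal 0 1).real_toNNReal)]
  constructor <;> intro h <;> refine h.congr (Filter.Eventually.of_forall fun z => ?_) <;>
    · simp only [NNReal.smul_def, smul_eq_mul]
      rw [Real.coe_toNNReal _ (pdf_nonneg z), pdf_eq]

lemma sqrt2pi_pos : (0:ℝ) < √(2*π) := Real.sqrt_pos.2 (by positivity)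

lemma integrable_sq_gauss : Integrable (fun z : ℝ => z^2) (gaussianReal 0 1) := by
  rw [integrable_gauss_iff]
  refine (integrable_sq_exp.const_mul ((√(2*π))⁻¹)).congr
    (Filter.Eventually.of_forall fun z => by ring)

lemma integrable_id_gauss : Integrable (fun z : ℝ => z) (gaussianReal 0 1) := by
  refine ((integrable_const (1:ℝ)).add integrable_sq_gauss).mono ?_ ?_
  · exact measurable_id.aestronglyMeasurable
  · refine Filter.Eventually.of_forall fun z => ?_
    simp only [norm_eq_abs]
    have : |z| ≤ 1 + z^2 := by nlinarith [sq_nonneg (|z| - 1), sq_abs z]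
    calc |z| ≤ 1 + z^2 := this
      _ ≤ |1 + z^2| := le_abs_self _
  
lemma int_sq_gauss : ∫ z, z^2 ∂(gaussianReal 0 1) = 1 := by
  rw [integral_gauss]
  have h : ∀ z : ℝ, (√(2*π))⁻¹ * rexp (-z^2/2) * z^2 = (√(2*π))⁻¹ * (z^2 * rexp (-z^2/2)) :=
    fun z => by ring
  simp_rw [h, integral_const_mul, int_sq_exp, inv_mul_cancel₀ sqrt2pi_pos.ne']

lemma int_id_gauss : ∫ z, z ∂(gaussianReal 0 1) = 0 := by
  rw [integral_gauss]
  have h : ∀ z : ℝ, (√(2*π))⁻¹ * rexp (-z^2/2) * z = (√(2*π))⁻¹ * (z * rexp (-z^2/2)) :=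
    fun z => by ring
  simp_rw [h, integral_const_mul, int_id_exp, mul_zero]

lemma measurable_softThr {α : ℝ} (hα : 0 ≤ α) : Measurable (fun y => softThr y α) := by
  simp_rw [softThr_eq hα]
  exact Measurable.ite (measurableSet_lt measurable_const measurable_id)
    (measurable_id.sub_const α)
    (Measurable.ite (measurableSet_lt measurable_id measurable_const)
      (measurable_id.add_const α) measurable_const)

lemma measurable_gsq {α : ℝ} (hα : 0 ≤ α) (x₀ : ℝ) :
    Measurable (fun z => (softThr (x₀ + z) α - x₀)^2) :=
  ((((measurable_softThr hα).comp (measurable_const_add x₀)).sub_const x₀).pow_const 2)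

lemma gsq_le {α : ℝ} (hα : 0 ≤ α) (x₀ z : ℝ) :
    (softThr (x₀ + z) α - x₀)^2 ≤ (|z| + α)^2 := by
  have h := abs_softThr_sub α (x₀ + z) x₀ hα
  rw [add_sub_cancel_left] at h
  calc (softThr (x₀ + z) α - x₀)^2 = |softThr (x₀ + z) α - x₀|^2 := (sq_abs _).symm
    _ ≤ (|z| + α)^2 := by nlinarith [abs_nonneg (softThr (x₀ + z) α - x₀), abs_nonneg z]

lemma integrable_bound {α : ℝ} (hα : 0 ≤ α) :
    Integrable (fun z : ℝ => (|z| + α)^2) (gaussianReal 0 1) := by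
  refine (((integrable_sq_gauss.const_mul 2).add (integrable_const (2*α^2)))).mono
    ?_ (Filter.Eventually.of_forall fun z => ?_)
  · exact ((measurable_abs.add_const α).pow_const 2).aestronglyMeasurable
  · simp only [norm_eq_abs]
    rw [abs_of_nonneg (by positivity)]
    have : (|z| + α)^2 ≤ 2*z^2 + 2*α^2 := by nlinarith [sq_nonneg (|z| - α), sq_abs z]
    exact this.trans (le_abs_self _)

lemma integrable_gsq {α : ℝ} (hα : 0 ≤ α) (x₀ : ℝ) :
    Integrable (fun z => (softThr (x₀ + z) α - x₀)^2) (gaussianReal 0 1) := by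
  refine (integrable_bound hα).mono (measurable_gsq hα x₀).aestronglyMeasurable
    (Filter.Eventually.of_forall fun z => ?_)
  simp only [norm_eq_abs]
  rw [abs_of_nonneg (sq_nonneg _)]
  exact (gsq_le hα x₀ z).trans (le_abs_self _)

lemma int_sub_sq {α : ℝ} (hα : 0 ≤ α) (c : ℝ) :
    ∫ z, (z + c)^2 ∂(gaussianReal 0 1) = 1 + c^2 := by
  have h : ∀ z : ℝ, (z + c)^2 = z^2 + ((2*c)*z + c^2) := fun z => by ring
  simp_rw [h]
  have h1 : Integrable (fun z : ℝ => 2*c*z + c^2) (gaussianReal 0 1) := by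
    exact (integrable_id_gauss.const_mul (2*c)).add (integrable_const (c^2))
  rw [integral_add integrable_sq_gauss h1,
    integral_add (integrable_id_gauss.const_mul (2*c)) (integrable_const (c^2)),
    integral_const_mul, int_id_gauss, int_sq_gauss, integral_const]
  simp

lemma gauss_map_neg : (gaussianReal 0 1).map (fun z => -z) = gaussianReal 0 1 := by
  have h := gaussianReal_map_const_mul (μ := 0) (v := 1) (-1)
  have he : (fun z : ℝ => -z) = ((-1 : ℝ) * ·) := by funext z; ring
  rw [he, h]
  norm_num

lemma integrable_gsq_neg {α : ℝ} (hα : 0 ≤ α) (x₀ : ℝ) :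
    Integrable (fun z => (softThr (x₀ + -z) α - x₀)^2) (gaussianReal 0 1) := by
  refine (integrable_bound hα).mono
    ((measurable_gsq hα x₀).comp measurable_neg).aestronglyMeasurable
    (Filter.Eventually.of_forall fun z => ?_)
  simp only [Function.comp, norm_eq_abs]
  rw [abs_of_nonneg (sq_nonneg _)]
  calc (softThr (x₀ + -z) α - x₀)^2 ≤ (|-z| + α)^2 := gsq_le hα x₀ (-z)
    _ ≤ |(|z| + α)^2| := by rw [abs_neg]; exact le_abs_self _

lemma risk_le {α : ℝ} (hα : 0 ≤ α) (x₀ : ℝ) :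
    ∫ z, (softThr (x₀ + z) α - x₀)^2 ∂(gaussianReal 0 1) ≤ 1 + α^2 := by
  have hneg : ∫ z, (softThr (x₀ + -z) α - x₀)^2 ∂(gaussianReal 0 1)
      = ∫ z, (softThr (x₀ + z) α - x₀)^2 ∂(gaussianReal 0 1) := by
    conv_rhs => rw [← gauss_map_neg]
    rw [integral_map measurable_neg.aemeasurable]
    rw [gauss_map_neg]
    exact (measurable_gsq hα x₀).aestronglyMeasurable
  have hsum : ∫ z, ((softThr (x₀ + z) α - x₀)^2 + (softThr (x₀ + -z) α - x₀)^2) ∂(gaussianReal 0 1)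
      ≤ ∫ z, 2 * (z^2 + α^2) ∂(gaussianReal 0 1) := by
    refine integral_mono ((integrable_gsq hα x₀).add (integrable_gsq_neg hα x₀))
      ((integrable_sq_gauss.add (integrable_const (α^2))).const_mul 2) (fun z => ?_)
    have := key_ineq hα x₀ z
    rw [show x₀ - z = x₀ + -z by ring] at this
    exact this
  rw [integral_add (integrable_gsq hα x₀) (integrable_gsq_neg hα x₀), hneg] at hsum
  have hrhs : ∫ z, 2 * (z^2 + α^2) ∂(gaussianReal 0 1) = 2 * (1 + α^2) := by
    rw [integral_const_mul, integral_add integrable_sq_gauss (integrable_const (α^2)),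
      int_sq_gauss, integral_const]
    simp
  rw [hrhs] at hsum
  linarith

lemma risk_tendsto_atTop {α : ℝ} (hα : 0 ≤ α) :
    Tendsto (fun x₀ : ℝ => ∫ z, (softThr (x₀ + z) α - x₀)^2 ∂(gaussianReal 0 1))
      atTop (nhds (1 + α^2)) := by
  have hlim : ∫ z, (z + -α)^2 ∂(gaussianReal 0 1) = 1 + α^2 := by
    rw [int_sub_sq hα (-α)]; ring_nf
  rw [← hlim]
  refine tendsto_integral_filter_of_dominated_convergence (fun z => (|z| + α)^2)
    (Filter.Eventually.of_forall fun x₀ => (measurable_gsq hα x₀).aestronglyMeasurable)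
    (Filter.Eventually.of_forall fun x₀ => Filter.Eventually.of_forall fun z => ?_)
    (integrable_bound hα)
    (Filter.Eventually.of_forall fun z => ?_)
  · rw [norm_eq_abs, abs_of_nonneg (sq_nonneg _)]
    exact gsq_le hα x₀ z
  · have hev : ∀ᶠ x₀ in atTop, (softThr (x₀ + z) α - x₀)^2 = (z + -α)^2 := by
      filter_upwards [eventually_ge_atTop (α - z + 1)] with x₀ hx₀
      rw [softThr_eq hα, if_pos (by linarith)]
      ring_nf
    exact Tendsto.congr' (EventuallyEq.symm hev) tendsto_const_nhds

lemma risk_tendsto_atBot {α : ℝ} (hα : 0 ≤ α) :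
    Tendsto (fun x₀ : ℝ => ∫ z, (softThr (x₀ + z) α - x₀)^2 ∂(gaussianReal 0 1))
      atBot (nhds (1 + α^2)) := by
  have hlim : ∫ z, (z + α)^2 ∂(gaussianReal 0 1) = 1 + α^2 := int_sub_sq hα α
  rw [← hlim]
  refine tendsto_integral_filter_of_dominated_convergence (fun z => (|z| + α)^2)
    (Filter.Eventually.of_forall fun x₀ => (measurable_gsq hα x₀).aestronglyMeasurable)
    (Filter.Eventually.of_forall fun x₀ => Filter.Eventually.of_forall fun z => ?_)
    (integrable_bound hα)
    (Filter.Eventually.of_forall fun z => ?_)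
  · rw [norm_eq_abs, abs_of_nonneg (sq_nonneg _)]
    exact gsq_le hα x₀ z
  · have hev : ∀ᶠ x₀ in atBot, (softThr (x₀ + z) α - x₀)^2 = (z + α)^2 := by
      filter_upwards [eventually_le_atBot (-α - z - 1)] with x₀ hx₀
      rw [softThr_eq hα, if_neg (by linarith), if_pos (by linarith)]
      ring_nf
    exact Tendsto.congr' (EventuallyEq.symm hev) tendsto_const_nhds

/-- For α ≥ 0, x₀ ↦ E[(η(x₀+Z;α) − x₀)²] is bounded by 1 + α², and the bound is
approached as |x₀| → ∞. -/
theorem soft_thresholding_risk_bound (α : ℝ) (hα : 0 ≤ α) :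
    (∀ x₀ : ℝ,
      ∫ z, (softThr (x₀ + z) α - x₀)^2 ∂(gaussianReal 0 1) ≤ 1 + α^2) ∧
    Filter.Tendsto
      (fun x₀ : ℝ => ∫ z, (softThr (x₀ + z) α - x₀)^2 ∂(gaussianReal 0 1))
      (Filter.comap (fun x₀ : ℝ => |x₀|) Filter.atTop) (nhds (1 + α^2)) := by
  refine ⟨risk_le hα, ?_⟩
  rw [comap_abs_atTop]
  rw [tendsto_sup]
  exact ⟨risk_tendsto_atBot hα, risk_tendsto_atTop hα⟩
end

section
/- Fix α ≥ 0, σ ≥ 0, δ > 0 and a probability distribution p₀ on ℝ with finite second moment. Define F(τ²) = σ² + (1/δ)·E[(η(X₀ + τZ; ατ) − X₀)²] for X₀ ∼ p₀ and Z ∼ N(0,1) independent. Then τ² ↦ F(τ²) is non-decreasing and concave on (0,∞). -/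
open MeasureTheory ProbabilityTheory

/-!
Fix x and write τ = √s. The loss (η(x + τz; ατ) - x)² equals τ²(z - α)², x² or τ²(z + α)²
according as x + τz lies above ατ, in [-ατ, ατ], or below -ατ. It is continuous in τ, so
differentiating under the Gaussian expectation produces no boundary terms: with μ = x/τ the
derivative in s is E[(Z - α)² 1{Z - α > -μ} + (Z + α)² 1{Z + α ≤ -μ}]. Substituting w = Z ∓ α
and writing φ for the standard normal density, this is ∫ w² φ(w + α) dw over w > -μ plus
∫ w² φ(w - α) dw over w ≤ -μ. It is nonnegative, and since φ(w + α) ≥ φ(w - α) exactly when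
w ≤ 0, it decreases as μ moves towards 0, which is what x/√s does as s grows. So each inner
expectation is non-decreasing and concave in s, and both properties pass to the p₀-average
(finite by the second moment) and through t ↦ σ² + t/δ.
-/

open Set Filter Topology
open scoped NNReal

theorem monotoneOn_integral {α : Type*} [MeasurableSpace α] {μ : Measure α} {S : Set ℝ}
    {f : ℝ → α → ℝ} (hf : ∀ᵐ x ∂μ, MonotoneOn (f · x) S) (hint : ∀ s ∈ S, Integrable (f s) μ) :
    MonotoneOn (fun s => ∫ x, f s x ∂μ) S := fun _ hs₁ _ hs₂ h =>
  integral_mono_ae (hint _ hs₁) (hint _ hs₂) (hf.mono fun _ hx => hx hs₁ hs₂ h)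

theorem concaveOn_integral {α E : Type*} [MeasurableSpace α] [AddCommMonoid E] [Module ℝ E]
    {μ : Measure α} {S : Set E} {f : E → α → ℝ} (hS : Convex ℝ S)
    (hf : ∀ᵐ x ∂μ, ConcaveOn ℝ S (f · x)) (hint : ∀ s ∈ S, Integrable (f s) μ) :
    ConcaveOn ℝ S (fun s => ∫ x, f s x ∂μ) := by
  refine ⟨hS, fun s₁ hs₁ s₂ hs₂ a b ha hb hab => ?_⟩
  have hint₁ := (hint s₁ hs₁).const_mul a
  have hint₂ := (hint s₂ hs₂).const_mul b
  simp only [smul_eq_mul]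
  rw [← integral_const_mul, ← integral_const_mul, ← integral_add hint₁ hint₂]
  exact integral_mono_ae (hint₁.add hint₂) (hint _ (hS hs₁ hs₂ ha hb hab))
    (hf.mono fun _ hx => hx.2 hs₁ hs₂ ha hb hab)

theorem div_mem_uIcc_zero_div {a b : ℝ} (ha : 0 < a) (hab : a ≤ b) (x : ℝ) :
    x / b ∈ uIcc 0 (x / a) := by
  rcases le_total 0 x with hx | hx
  · exact mem_uIcc_of_le (div_nonneg hx (ha.trans_le hab).le) (div_le_div_of_nonneg_left hx ha hab)
  · refine mem_uIcc_of_ge ?_ (div_nonpos_of_nonpos_of_nonneg hx (ha.trans_le hab).le)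
    simpa [neg_div] using div_le_div_of_nonneg_left (neg_nonneg.2 hx) ha hab

section SoftThreshold

variable {y θ θ' : ℝ}

theorem softThr_eq_sub_clamp (hθ : 0 ≤ θ) (y : ℝ) : softThr y θ = y - max (-θ) (min y θ) := by
  rcases lt_trichotomy y 0 with hy | rfl | hy
  · rw [softThr, Real.sign_of_neg hy, abs_of_neg hy]
    rcases le_total y (-θ) with h | h
    · rw [max_eq_left (by linarith), min_eq_left (by linarith), max_eq_left h]; ring
    · rw [max_eq_right (by linarith), min_eq_left (by linarith), max_eq_right h]; ring
  · simp [softThr, hθ]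
  · rw [softThr, Real.sign_of_pos hy, abs_of_pos hy]
    rcases le_total y θ with h | h
    · rw [max_eq_right (by linarith), min_eq_left h, max_eq_right (by linarith)]; ring
    · rw [max_eq_left (by linarith), min_eq_right h, max_eq_right (by linarith)]; ring

theorem softThr_of_lt (hθ : 0 ≤ θ) (h : θ < y) : softThr y θ = y - θ := by
  rw [softThr_eq_sub_clamp hθ, min_eq_right h.le, max_eq_right (by linarith)]

theorem softThr_of_lt_neg (hθ : 0 ≤ θ) (h : y < -θ) : softThr y θ = y + θ := by
  rw [softThr_eq_sub_clamp hθ, min_eq_left (by linarith), max_eq_left h.le, sub_neg_eq_add]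

theorem softThr_of_abs_le (h : |y| ≤ θ) : softThr y θ = 0 := by
  rw [softThr, max_eq_right (by linarith), mul_zero]

theorem abs_softThr_le (hθ : 0 ≤ θ) (y : ℝ) : |softThr y θ| ≤ |y| := by
  rw [softThr, abs_mul, abs_of_nonneg (le_max_right (|y| - θ) 0)]
  calc |Real.sign y| * max (|y| - θ) 0 ≤ 1 * |y| := by
        gcongr
        · rcases Real.sign_apply_eq y with h | h | h <;> norm_num [h]
        · exact max_le (by linarith) (abs_nonneg y)
    _ = |y| := one_mul _

theorem abs_softThr_sub_softThr_le (hθ : 0 ≤ θ) (hθ' : 0 ≤ θ') (y y' : ℝ) :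
    |softThr y θ - softThr y' θ'| ≤ 2 * |y - y'| + |θ - θ'| := by
  have hclamp := (abs_max_sub_max_le_max (-θ) (min y θ) (-θ') (min y' θ')).trans
    (max_le_max le_rfl (abs_min_sub_min_le_max y θ y' θ'))
  rw [neg_sub_neg, abs_sub_comm θ' θ] at hclamp
  rw [softThr_eq_sub_clamp hθ, softThr_eq_sub_clamp hθ']
  calc _ = |(y - y') - (max (-θ) (min y θ) - max (-θ') (min y' θ'))| := by ring_nf
    _ ≤ |y - y'| + |max (-θ) (min y θ) - max (-θ') (min y' θ')| := abs_sub _ _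
    _ ≤ 2 * |y - y'| + |θ - θ'| := by
      have := abs_nonneg (y - y'); have := abs_nonneg (θ - θ')
      have : max |θ - θ'| (max |y - y'| |θ - θ'|) ≤ |y - y'| + |θ - θ'| :=
        max_le (by linarith) (max_le (by linarith) (by linarith))
      linarith

theorem continuous_softThr (hθ : 0 ≤ θ) : Continuous fun y => softThr y θ := by
  simp only [softThr_eq_sub_clamp hθ]
  fun_prop

end SoftThreshold

section Gaussian

variable {m : ℝ} {v : ℝ≥0}

theorem gaussianPDFReal_le_gaussianPDFReal {m' a b : ℝ} (h : |b - m'| ≤ |a - m|) :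
    gaussianPDFReal m v a ≤ gaussianPDFReal m' v b := by
  simp only [gaussianPDFReal_def]
  have : (b - m') ^ 2 ≤ (a - m) ^ 2 := sq_le_sq.mpr h
  gcongr

theorem integrable_gaussianReal_iff (hv : v ≠ 0) {g : ℝ → ℝ} :
    Integrable g (gaussianReal m v) ↔ Integrable fun x => gaussianPDFReal m v x * g x := by
  rw [gaussianReal_of_var_ne_zero _ hv, integrable_withDensity_iff_integrable_smul'
    (measurable_gaussianPDF m v) (ae_of_all _ fun _ => gaussianPDF_lt_top)]
  simp

theorem integrable_sq_gaussianReal : Integrable (fun x => x ^ 2) (gaussianReal m v) :=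
  (memLp_id_gaussianReal 2).integrable_sq

theorem memLp_const_add_mul_abs_gaussianReal (a b : ℝ) :
    MemLp (fun z => a + b * |z|) 2 (gaussianReal m v) :=
  (memLp_const a).add ((memLp_id_gaussianReal 2).norm.const_mul b)

theorem integral_comp_add_gaussianReal (c : ℝ) {g : ℝ → ℝ} (hg : Measurable g) :
    ∫ z, g (z + c) ∂gaussianReal m v = ∫ w, g w ∂gaussianReal (m + c) v := by
  rw [← gaussianReal_map_add_const, integral_map (by fun_prop) hg.aestronglyMeasurable]

theorem integrable_comp_add_gaussianReal (c : ℝ) {g : ℝ → ℝ} (hg : Measurable g) :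
    Integrable (fun z => g (z + c)) (gaussianReal m v) ↔ Integrable g (gaussianReal (m + c) v) := by
  rw [← gaussianReal_map_add_const, integrable_map_measure hg.aestronglyMeasurable (by fun_prop)]
  rfl

end Gaussian

noncomputable def softThrLoss (α x τ z : ℝ) : ℝ := (softThr (x + τ * z) (α * τ) - x) ^ 2

noncomputable def softThrRisk (α x τ : ℝ) : ℝ := ∫ z, softThrLoss α x τ z ∂gaussianReal 0 1

section Derivative

/-- The derivative of `softThrLoss α x τ z` in `τ ^ 2` when `μ = x / τ`, off the two kinks. -/
noncomputable def softThrLossDeriv (α μ z : ℝ) : ℝ :=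
  (Ioi (-μ)).indicator (· ^ 2) (z - α) + (Iic (-μ)).indicator (· ^ 2) (z + α)

noncomputable def softThrRiskDeriv (α μ : ℝ) : ℝ :=
  ∫ w, w ^ 2 * if -μ < w then gaussianPDFReal (-α) 1 w else gaussianPDFReal α 1 w

theorem measurable_softThrLossDeriv (α μ : ℝ) : Measurable (softThrLossDeriv α μ) :=
  (((measurable_id.pow_const 2).indicator measurableSet_Ioi).comp (measurable_id.sub_const α)).add
    (((measurable_id.pow_const 2).indicator measurableSet_Iic).comp (measurable_id.add_const α))

theorem integral_softThrLossDeriv (α μ : ℝ) :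
    ∫ z, softThrLossDeriv α μ z ∂gaussianReal 0 1 = softThrRiskDeriv α μ := by
  set g₁ := (Ioi (-μ)).indicator fun w : ℝ => w ^ 2
  set g₂ := (Iic (-μ)).indicator fun w : ℝ => w ^ 2
  have hg₁ : Measurable g₁ := (measurable_id.pow_const 2).indicator measurableSet_Ioi
  have hg₂ : Measurable g₂ := (measurable_id.pow_const 2).indicator measurableSet_Iic
  have int₁ (c : ℝ) : Integrable g₁ (gaussianReal c 1) :=
    integrable_sq_gaussianReal.indicator measurableSet_Ioi
  have int₂ (c : ℝ) : Integrable g₂ (gaussianReal c 1) :=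
    integrable_sq_gaussianReal.indicator measurableSet_Iic
  calc ∫ z, softThrLossDeriv α μ z ∂gaussianReal 0 1
      = ∫ z, g₁ (z + -α) ∂gaussianReal 0 1 + ∫ z, g₂ (z + α) ∂gaussianReal 0 1 := by
        rw [← integral_add ((integrable_comp_add_gaussianReal _ hg₁).2 (int₁ _))
          ((integrable_comp_add_gaussianReal _ hg₂).2 (int₂ _))]
        simp only [softThrLossDeriv, g₁, g₂, sub_eq_add_neg]
    _ = (∫ w, gaussianPDFReal (-α) 1 w * g₁ w) + ∫ w, gaussianPDFReal α 1 w * g₂ w := by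
        simp only [integral_comp_add_gaussianReal _ hg₁, integral_comp_add_gaussianReal _ hg₂,
          zero_add, integral_gaussianReal_eq_integral_smul one_ne_zero, smul_eq_mul]
    _ = softThrRiskDeriv α μ := by
        rw [← integral_add ((integrable_gaussianReal_iff one_ne_zero).1 (int₁ _))
          ((integrable_gaussianReal_iff one_ne_zero).1 (int₂ _))]
        congr 1 with w
        by_cases h : -μ < w <;> simp [g₁, g₂, h, not_lt.mp, mul_comm]

theorem integrable_sq_mul_ite_gaussianPDFReal (α μ : ℝ) :
    Integrable fun w : ℝ =>
      w ^ 2 * if -μ < w then gaussianPDFReal (-α) 1 w else gaussianPDFReal α 1 w := by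
  have h (c : ℝ) : Integrable fun w : ℝ => w ^ 2 * gaussianPDFReal c 1 w := by
    simpa [mul_comm] using (integrable_gaussianReal_iff one_ne_zero).1
      (integrable_sq_gaussianReal (m := c) (v := 1))
  refine ((h (-α)).add (h α)).mono' ?_ (ae_of_all _ fun w => ?_)
  · exact ((measurable_id.pow_const 2).mul (Measurable.ite measurableSet_Ioi
      (measurable_gaussianPDFReal _ _) (measurable_gaussianPDFReal _ _))).aestronglyMeasurable
  · have := gaussianPDFReal_nonneg (-α) 1 w
    have := gaussianPDFReal_nonneg α 1 w
    split_ifs <;> rw [Real.norm_of_nonneg (by positivity)] <;> simp only [Pi.add_apply] <;>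
      nlinarith [sq_nonneg w]

theorem softThrRiskDeriv_nonneg (α μ : ℝ) : 0 ≤ softThrRiskDeriv α μ :=
  integral_nonneg fun w =>
    mul_nonneg (sq_nonneg w) (by split_ifs <;> exact gaussianPDFReal_nonneg _ _ _)

theorem softThrRiskDeriv_le_of_mem_uIcc {α μ₁ μ₂ : ℝ} (hα : 0 ≤ α) (h : μ₁ ∈ uIcc 0 μ₂) :
    softThrRiskDeriv α μ₁ ≤ softThrRiskDeriv α μ₂ := by
  refine integral_mono (integrable_sq_mul_ite_gaussianPDFReal α μ₁)
    (integrable_sq_mul_ite_gaussianPDFReal α μ₂)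
    fun w => mul_le_mul_of_nonneg_left ?_ (sq_nonneg w)
  split_ifs with h₁ h₂ h₂
  · exact le_rfl
  · have hw : 0 ≤ w := by rcases mem_uIcc.mp h with h | h <;> linarith
    refine gaussianPDFReal_le_gaussianPDFReal (abs_le.mpr ⟨?_, ?_⟩) <;>
      rw [abs_of_nonneg] <;> linarith
  · have hw : w ≤ 0 := by rcases mem_uIcc.mp h with h | h <;> linarith
    refine gaussianPDFReal_le_gaussianPDFReal (abs_le.mpr ⟨?_, ?_⟩) <;>
      rw [abs_of_nonpos] <;> linarith
  · exact le_rfl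

end Derivative

section Risk

variable {α : ℝ}

theorem hasDerivAt_softThrLoss (hα : 0 ≤ α) {x z τ : ℝ} (hτ : 0 < τ)
    (h₁ : x + τ * z ≠ α * τ) (h₂ : x + τ * z ≠ -(α * τ)) :
    HasDerivAt (softThrLoss α x · z) (2 * τ * softThrLossDeriv α (x / τ) z) τ := by
  have hθ : ∀ᶠ t in 𝓝 τ, 0 ≤ α * t :=
    (eventually_gt_nhds hτ).mono fun t ht => mul_nonneg hα ht.le
  have hx : x / τ * τ = x := div_mul_cancel₀ x hτ.ne'
  have hquad (c : ℝ) : HasDerivAt (fun t : ℝ => t ^ 2 * c) (2 * τ * c) τ := by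
    simpa using (hasDerivAt_pow 2 τ).mul_const c
  rcases h₁.lt_or_gt with hlt | hgt
  · rcases h₂.lt_or_gt with hlow | hmid
    · have hval : softThrLossDeriv α (x / τ) z = (z + α) ^ 2 := by
        have : z + α ≤ -(x / τ) := by nlinarith
        simp [softThrLossDeriv, this, show ¬ -(x / τ) < z - α by linarith]
      have hev : ∀ᶠ t in 𝓝 τ, x + t * z < -(α * t) :=
        ContinuousAt.eventually_lt (by fun_prop) (by fun_prop) hlow
      rw [hval]
      refine (hquad _).congr_of_eventuallyEq ?_
      filter_upwards [hev, hθ] with t ht hθt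
      rw [softThrLoss, softThr_of_lt_neg hθt ht]
      ring
    · have hval : softThrLossDeriv α (x / τ) z = 0 := by
        have : ¬ -(x / τ) < z - α := by nlinarith
        simp [softThrLossDeriv, this, show -(x / τ) < z + α by nlinarith]
      have hev : ∀ᶠ t in 𝓝 τ, x + t * z < α * t :=
        ContinuousAt.eventually_lt (by fun_prop) (by fun_prop) hlt
      have hev' : ∀ᶠ t in 𝓝 τ, -(α * t) < x + t * z :=
        ContinuousAt.eventually_lt (by fun_prop) (by fun_prop) hmid
      rw [hval, mul_zero]
      refine (hasDerivAt_const τ (x ^ 2)).congr_of_eventuallyEq ?_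
      filter_upwards [hev, hev'] with t ht ht'
      rw [softThrLoss, softThr_of_abs_le (abs_le.mpr ⟨ht'.le, ht.le⟩)]
      ring
  · have hval : softThrLossDeriv α (x / τ) z = (z - α) ^ 2 := by
      have : -(x / τ) < z - α := by nlinarith
      simp [softThrLossDeriv, this, show ¬ z + α ≤ -(x / τ) by linarith]
    have hev : ∀ᶠ t in 𝓝 τ, α * t < x + t * z :=
      ContinuousAt.eventually_lt (by fun_prop) (by fun_prop) hgt
    rw [hval]
    refine (hquad _).congr_of_eventuallyEq ?_
    filter_upwards [hev, hθ] with t ht hθt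
    rw [softThrLoss, softThr_of_lt hθt ht]
    ring

theorem abs_softThr_add_mul_sub_le (hα : 0 ≤ α) {τ : ℝ} (hτ : 0 ≤ τ) (x z : ℝ) :
    |softThr (x + τ * z) (α * τ) - x| ≤ 2 * |x| + τ * |z| :=
  calc |softThr (x + τ * z) (α * τ) - x|
      ≤ |softThr (x + τ * z) (α * τ)| + |x| := abs_sub _ _
    _ ≤ |x + τ * z| + |x| := by linarith [abs_softThr_le (mul_nonneg hα hτ) (x + τ * z)]
    _ ≤ |x| + τ * |z| + |x| := by
        gcongr
        simpa [abs_mul, abs_of_nonneg hτ] using abs_add_le x (τ * z)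
    _ = 2 * |x| + τ * |z| := by ring

theorem memLp_softThr_add_mul_sub (hα : 0 ≤ α) {τ : ℝ} (hτ : 0 ≤ τ) (x : ℝ) {m : ℝ} {v : ℝ≥0} :
    MemLp (fun z => softThr (x + τ * z) (α * τ) - x) 2 (gaussianReal m v) := by
  refine (memLp_const_add_mul_abs_gaussianReal (2 * |x|) τ).of_le ?_ (ae_of_all _ fun z => ?_)
  · exact (((continuous_softThr (mul_nonneg hα hτ)).comp (by fun_prop)).sub
      continuous_const).aestronglyMeasurable
  · rw [Real.norm_eq_abs, Real.norm_eq_abs, abs_of_nonneg (by positivity : 0 ≤ 2 * |x| + τ * |z|)]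
    exact abs_softThr_add_mul_sub_le hα hτ x z

theorem integrable_softThrLoss (hα : 0 ≤ α) {τ : ℝ} (hτ : 0 ≤ τ) (x : ℝ) :
    Integrable (softThrLoss α x τ) (gaussianReal 0 1) :=
  (memLp_softThr_add_mul_sub hα hτ x).integrable_sq

theorem lipschitzOnWith_softThrLoss (hα : 0 ≤ α) (x z R : ℝ) :
    LipschitzOnWith (Real.nnabs ((α + 2 * |z|) * (4 * |x| + 2 * R * |z|)))
      (softThrLoss α x · z) (Icc 0 R) := by
  refine LipschitzOnWith.of_dist_le_mul fun t ht t' ht' => ?_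
  have hA (t : ℝ) (ht : t ∈ Icc 0 R) :
      |softThr (x + t * z) (α * t) - x| ≤ 2 * |x| + R * |z| := by
    have := abs_softThr_add_mul_sub_le hα ht.1 x z
    have : t * |z| ≤ R * |z| := by gcongr; exact ht.2
    linarith
  have hAB : |softThr (x + t * z) (α * t) - softThr (x + t' * z) (α * t')|
      ≤ (α + 2 * |z|) * |t - t'| :=
    calc _ ≤ 2 * |x + t * z - (x + t' * z)| + |α * t - α * t'| :=
          abs_softThr_sub_softThr_le (mul_nonneg hα ht.1) (mul_nonneg hα ht'.1) _ _
      _ = (α + 2 * |z|) * |t - t'| := by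
          rw [show x + t * z - (x + t' * z) = (t - t') * z by ring, ← mul_sub, abs_mul, abs_mul,
            abs_of_nonneg hα]
          ring
  have hR : 0 ≤ 2 * |x| + R * |z| := (abs_nonneg _).trans (hA t ht)
  rw [Real.coe_nnabs, abs_of_nonneg (mul_nonneg (by positivity) (by linarith)), Real.dist_eq,
    Real.dist_eq, softThrLoss, softThrLoss, sq_sub_sq, abs_mul]
  calc _ ≤ (2 * (2 * |x| + R * |z|)) * ((α + 2 * |z|) * |t - t'|) := by
        gcongr
        · calc _ ≤ |softThr (x + t * z) (α * t) - x| + |softThr (x + t' * z) (α * t') - x| :=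
                abs_add_le _ _
            _ ≤ _ := by linarith [hA t ht, hA t' ht']
        · simpa using hAB
    _ = (α + 2 * |z|) * (4 * |x| + 2 * R * |z|) * |t - t'| := by ring

theorem hasDerivAt_softThrRisk (hα : 0 ≤ α) (x : ℝ) {τ : ℝ} (hτ : 0 < τ) :
    HasDerivAt (softThrRisk α x) (2 * τ * softThrRiskDeriv α (x / τ)) τ := by
  have := nullSingletonClass_gaussianReal (μ := 0) one_ne_zero
  have hball : Metric.ball τ τ ⊆ Icc 0 (2 * τ) := fun t ht => by
    rw [Metric.mem_ball, Real.dist_eq, abs_lt] at ht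
    constructor <;> linarith
  have hkinks : ∀ᵐ z ∂gaussianReal 0 1, x + τ * z ≠ α * τ ∧ x + τ * z ≠ -(α * τ) := by
    filter_upwards [Measure.ae_ne _ (α - x / τ), Measure.ae_ne _ (-α - x / τ)] with z h₁ h₂
    constructor <;> intro h
    · exact h₁ (by field_simp; linarith)
    · exact h₂ (by field_simp; linarith)
  obtain ⟨-, hderiv⟩ := hasDerivAt_integral_of_dominated_loc_of_lip (Metric.ball_mem_nhds τ hτ)
    ((eventually_gt_nhds hτ).mono fun t ht => (integrable_softThrLoss hα ht.le x).1)
    (integrable_softThrLoss hα hτ.le x)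
    ((measurable_softThrLossDeriv α (x / τ)).const_mul (2 * τ)).aestronglyMeasurable
    (ae_of_all _ fun z => (lipschitzOnWith_softThrLoss hα x z (2 * τ)).mono hball)
    ((memLp_const_add_mul_abs_gaussianReal α 2).integrable_mul
      (memLp_const_add_mul_abs_gaussianReal (4 * |x|) (2 * (2 * τ))))
    (hkinks.mono fun z hz => hasDerivAt_softThrLoss hα hτ hz.1 hz.2)
  rwa [integral_const_mul, integral_softThrLossDeriv] at hderiv

theorem hasDerivAt_softThrRisk_sqrt (hα : 0 ≤ α) (x : ℝ) {s : ℝ} (hs : 0 < s) :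
    HasDerivAt (fun s => softThrRisk α x √s) (softThrRiskDeriv α (x / √s)) s := by
  have hsqrt := Real.sqrt_pos.2 hs
  refine ((hasDerivAt_softThrRisk hα x hsqrt).comp s (Real.hasDerivAt_sqrt hs.ne')).congr_deriv ?_
  field_simp

theorem monotoneOn_softThrRisk_sqrt (hα : 0 ≤ α) (x : ℝ) :
    MonotoneOn (fun s => softThrRisk α x √s) (Ioi 0) := by
  have hderiv := fun s (hs : s ∈ Ioi (0 : ℝ)) => hasDerivAt_softThrRisk_sqrt hα x hs
  refine monotoneOn_of_hasDerivWithinAt_nonneg (f' := fun s => softThrRiskDeriv α (x / √s))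
    (convex_Ioi 0) (fun s hs => (hderiv s hs).continuousAt.continuousWithinAt) (fun s hs => ?_)
    (fun s _ => softThrRiskDeriv_nonneg α _)
  rw [interior_Ioi] at hs ⊢
  exact (hderiv s hs).hasDerivWithinAt

theorem concaveOn_softThrRisk_sqrt (hα : 0 ≤ α) (x : ℝ) :
    ConcaveOn ℝ (Ioi 0) (fun s => softThrRisk α x √s) := by
  have hderiv := fun s (hs : s ∈ Ioi (0 : ℝ)) => hasDerivAt_softThrRisk_sqrt hα x hs
  refine AntitoneOn.concaveOn_of_deriv (convex_Ioi 0)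
    (fun s hs => (hderiv s hs).continuousAt.continuousWithinAt) ?_ ?_ <;> rw [interior_Ioi]
  · exact fun s hs => (hderiv s hs).differentiableAt.differentiableWithinAt
  · intro s₁ hs₁ s₂ hs₂ h
    rw [(hderiv s₁ hs₁).deriv, (hderiv s₂ hs₂).deriv]
    exact softThrRiskDeriv_le_of_mem_uIcc hα
      (div_mem_uIcc_zero_div (Real.sqrt_pos.2 hs₁) (Real.sqrt_le_sqrt h) x)

theorem softThrRisk_le (hα : 0 ≤ α) (x : ℝ) {τ : ℝ} (hτ : 0 ≤ τ) :
    softThrRisk α x τ ≤ 8 * x ^ 2 + 2 * τ ^ 2 * ∫ z, z ^ 2 ∂gaussianReal 0 1 := by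
  have hbound : Integrable (fun z : ℝ => 8 * x ^ 2 + 2 * τ ^ 2 * z ^ 2) (gaussianReal 0 1) :=
    (integrable_const _).add (integrable_sq_gaussianReal.const_mul _)
  calc softThrRisk α x τ ≤ ∫ z, 8 * x ^ 2 + 2 * τ ^ 2 * z ^ 2 ∂gaussianReal 0 1 := by
        refine integral_mono (integrable_softThrLoss hα hτ x) hbound fun z => ?_
        calc softThrLoss α x τ z = |softThr (x + τ * z) (α * τ) - x| ^ 2 := (sq_abs _).symm
          _ ≤ (2 * |x| + τ * |z|) ^ 2 := by
              gcongr
              exact abs_softThr_add_mul_sub_le hα hτ x z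
          _ ≤ 8 * x ^ 2 + 2 * τ ^ 2 * z ^ 2 := by
              nlinarith [sq_abs x, sq_abs z, sq_nonneg (2 * |x| - τ * |z|)]
    _ = _ := by
        rw [integral_add (integrable_const _) (integrable_sq_gaussianReal.const_mul _),
          integral_const, integral_const_mul]
        simp

theorem integrable_softThrRisk (hα : 0 ≤ α) {p : Measure ℝ} [IsFiniteMeasure p]
    (h2 : Integrable (fun x => x ^ 2) p) {τ : ℝ} (hτ : 0 ≤ τ) :
    Integrable (fun x => softThrRisk α x τ) p := by
  have hmeas : StronglyMeasurable fun x => softThrRisk α x τ := by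
    refine StronglyMeasurable.integral_prod_right' (f := fun q : ℝ × ℝ => softThrLoss α q.1 τ q.2)
      (Continuous.stronglyMeasurable ?_)
    simp only [softThrLoss, softThr_eq_sub_clamp (mul_nonneg hα hτ)]
    fun_prop
  refine ((h2.const_mul 8).add (integrable_const (2 * τ ^ 2 * ∫ z, z ^ 2 ∂gaussianReal 0 1))).mono'
    hmeas.aestronglyMeasurable (ae_of_all _ fun x => ?_)
  have : 0 ≤ softThrRisk α x τ := integral_nonneg fun _ => sq_nonneg _
  rw [Real.norm_of_nonneg this]
  exact softThrRisk_le hα x hτ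

end Risk

theorem state_evolution_map_monotone_concave_general (α σ δ : ℝ)
    (hα : 0 ≤ α) (hδ : 0 < δ)
    (p₀ : Measure ℝ) [IsProbabilityMeasure p₀]
    (h2 : Integrable (fun x : ℝ => x^2) p₀) :
    MonotoneOn (fun s : ℝ => σ^2 + (1/δ) *
        ∫ x, ∫ z, (softThr (x + Real.sqrt s * z) (α * Real.sqrt s) - x)^2
          ∂(gaussianReal 0 1) ∂p₀) (Set.Ioi 0) ∧
    ConcaveOn ℝ (Set.Ioi 0) (fun s : ℝ => σ^2 + (1/δ) *
        ∫ x, ∫ z, (softThr (x + Real.sqrt s * z) (α * Real.sqrt s) - x)^2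
          ∂(gaussianReal 0 1) ∂p₀) := by
  have hint : ∀ s ∈ Ioi (0 : ℝ), Integrable (fun x => softThrRisk α x √s) p₀ :=
    fun s _ => integrable_softThrRisk hα h2 (Real.sqrt_nonneg s)
  have hδ' : 0 ≤ 1 / δ := by positivity
  refine ⟨fun s₁ hs₁ s₂ hs₂ h => ?_, ?_⟩
  · have := monotoneOn_integral (ae_of_all _ (monotoneOn_softThrRisk_sqrt hα)) hint hs₁ hs₂ h
    exact add_le_add_right (mul_le_mul_of_nonneg_left this hδ') _
  · have := concaveOn_integral (convex_Ioi 0) (ae_of_all _ (concaveOn_softThrRisk_sqrt hα)) hint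
    exact (concaveOn_const _ (convex_Ioi 0)).add (this.smul hδ')

/-- The state evolution map τ² ↦ F(τ²) = σ² + (1/δ)E[(η(X₀+τZ;ατ)−X₀)²] is
non-decreasing and concave on (0,∞). -/
theorem state_evolution_map_monotone_concave (α σ δ : ℝ)
    (hα : 0 ≤ α) (hσ : 0 ≤ σ) (hδ : 0 < δ)
    (p₀ : Measure ℝ) [IsProbabilityMeasure p₀]
    (h2 : Integrable (fun x : ℝ => x^2) p₀) :
    MonotoneOn (fun s : ℝ => σ^2 + (1/δ) *
        ∫ x, ∫ z, (softThr (x + Real.sqrt s * z) (α * Real.sqrt s) - x)^2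
          ∂(gaussianReal 0 1) ∂p₀) (Set.Ioi 0) ∧
    ConcaveOn ℝ (Set.Ioi 0) (fun s : ℝ => σ^2 + (1/δ) *
        ∫ x, ∫ z, (softThr (x + Real.sqrt s * z) (α * Real.sqrt s) - x)^2
          ∂(gaussianReal 0 1) ∂p₀) :=
  state_evolution_map_monotone_concave_general α σ δ hα hδ p₀ h2
end

section
/- Let F:(0,∞)→(0,∞) be continuous, non-decreasing, concave, with F(τ²) ≥ σ² > 0 for all τ² and F'(τ²) < 1 for large τ². Then the fixed point equation τ² = F(τ²) has a unique solution τ*² > 0, and for any initial condition τ₀² > 0, the sequence defined by τ_{t+1}² = F(τ_t²) converges to τ*². -/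
/-- A continuous, non-decreasing, concave map F on (0,∞) with F ≥ σ² > 0 and
slope < 1 for large arguments has a unique fixed point, and the iterates
τ_{t+1}² = F(τ_t²) converge to it from any initial condition τ₀² > 0. -/
theorem state_evolution_fixed_point (σ : ℝ) (hσ : 0 < σ) (F : ℝ → ℝ)
    (hFcont : ContinuousOn F (Set.Ioi 0))
    (hFmono : MonotoneOn F (Set.Ioi 0))
    (hFconc : ConcaveOn ℝ (Set.Ioi 0) F)
    (hFlb : ∀ s : ℝ, 0 < s → σ^2 ≤ F s)
    (hF' : ∃ T : ℝ, 0 < T ∧ ∀ s : ℝ, T ≤ s → deriv F s < 1) :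
    ∃ sfix : ℝ, (0 < sfix ∧ F sfix = sfix) ∧
      (∀ s : ℝ, 0 < s → F s = s → s = sfix) ∧
      ∀ τ₀ : ℝ, 0 < τ₀ →
        Filter.Tendsto (fun t : ℕ => F^[t] τ₀) Filter.atTop (nhds sfix) := by
  classical
  obtain ⟨T, hT, hT1⟩ := hF'
  have hσ2 : (0:ℝ) < σ^2 := by positivity
  -- Core contradiction engine: if F has secant slope ≥ 1 on [y,z] and F y ≤ y, contradiction.
  have lemC : ∀ y z : ℝ, 0 < y → y < z → z - y ≤ F z - F y → F y ≤ y → False := by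
    intro y z hy hyz h1 h2
    set p := min y (σ^2) / 2 with hp
    have hp0 : 0 < p := by
      have := lt_min hy hσ2
      positivity
    have hpy : p < y := by
      have h := min_le_left y (σ^2)
      have := lt_min hy hσ2
      rw [hp]; linarith
    have hpσ : p < σ^2 := by
      have h := min_le_right y (σ^2)
      rw [hp]; linarith
    have hs := hFconc.slope_anti_adjacent (x := p) (y := y) (z := z)
      (Set.mem_Ioi.2 hp0) (Set.mem_Ioi.2 (hy.trans hyz)) hpy hyz
    have h3 : (1:ℝ) ≤ (F z - F y) / (z - y) := by
      rw [le_div_iff₀ (by linarith)]; linarith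
    have h4 : (1:ℝ) ≤ (F y - F p) / (y - p) := le_trans h3 hs
    rw [le_div_iff₀ (by linarith)] at h4
    have h6 := hFlb p hp0
    linarith
  -- Find a differentiability point s0 > T, using a.e. differentiability of monotone functions.
  set G : ℝ → ℝ := fun x => F (max x T) with hG
  have hGmono : Monotone G := fun x y hxy =>
    hFmono (Set.mem_Ioi.2 (lt_of_lt_of_le hT (le_max_right _ _)))
      (Set.mem_Ioi.2 (lt_of_lt_of_le hT (le_max_right _ _)))
      (max_le_max hxy le_rfl)
  obtain ⟨s0, hs0T, hdG⟩ : ∃ s0, T < s0 ∧ DifferentiableAt ℝ G s0 := by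
    by_contra h
    push_neg at h
    have hsub : Set.Ioi T ⊆ {x | ¬ DifferentiableAt ℝ G x} := fun x hx => h x hx
    have h0 := hGmono.ae_differentiableAt
    have hz : MeasureTheory.volume (Set.Ioi T) = 0 :=
      MeasureTheory.measure_mono_null hsub (MeasureTheory.ae_iff.1 h0)
    simp [Real.volume_Ioi] at hz
  have hFG : F =ᶠ[nhds s0] G := by
    filter_upwards [Ioi_mem_nhds hs0T] with x hx
    show F x = F (max x T)
    rw [max_eq_left (le_of_lt hx)]
  have hdF : DifferentiableAt ℝ F s0 := (hFG.differentiableAt_iff).2 hdG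
  set c := deriv F s0 with hcdef
  have hc1 : c < 1 := hT1 s0 hs0T.le
  have hs0pos : 0 < s0 := hT.trans hs0T
  -- Linear upper bound from concavity + derivative
  have hlin : ∀ s, s0 < s → F s ≤ F s0 + c * (s - s0) := by
    intro s hs
    have hkey : (F s - F s0) / (s - s0) ≤ c := by
      have htend : Filter.Tendsto (slope F s0) (nhdsWithin s0 (Set.Ioi s0)) (nhds c) :=
        (hasDerivAt_iff_tendsto_slope.1 hdF.hasDerivAt).mono_left
          (nhdsWithin_mono _ (fun x hx => ne_of_gt hx))
      refine ge_of_tendsto htend ?_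
      filter_upwards [Ioo_mem_nhdsGT_of_mem (Set.left_mem_Ico.2 hs)] with y hy
      rw [slope_def_field]
      have hsec := hFconc.neg.secant_mono (a := s0) (x := y) (y := s)
        (Set.mem_Ioi.2 hs0pos) (Set.mem_Ioi.2 (hs0pos.trans hy.1))
        (Set.mem_Ioi.2 (hs0pos.trans hs)) (ne_of_gt hy.1) (ne_of_gt hs) hy.2.le
      simp only [Pi.neg_apply] at hsec
      have e1 : (-F y - -F s0) / (y - s0) = -((F y - F s0) / (y - s0)) := by ring
      have e2 : (-F s - -F s0) / (s - s0) = -((F s - F s0) / (s - s0)) := by ring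
      rw [e1, e2] at hsec
      linarith
    rw [div_le_iff₀ (by linarith)] at hkey
    linarith
  -- A point M where F M < M
  obtain ⟨M, hMs0, hMa, hMF⟩ : ∃ M, s0 < M ∧ σ^2 < M ∧ F M < M := by
    refine ⟨max (max (s0+1) (σ^2+1)) ((F s0 - c*s0)/(1-c) + 1), ?_, ?_, ?_⟩
    · exact lt_of_lt_of_le (by linarith) (le_trans (le_max_left _ _) (le_max_left _ _))
    · exact lt_of_lt_of_le (by linarith) (le_trans (le_max_right _ _) (le_max_left _ _))
    · set M := max (max (s0+1) (σ^2+1)) ((F s0 - c*s0)/(1-c) + 1) with hM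
      have hMs0' : s0 < M :=
        lt_of_lt_of_le (by linarith) (le_trans (le_max_left _ _) (le_max_left _ _))
      have h1c : (0:ℝ) < 1 - c := by linarith
      set d := (F s0 - c*s0)/(1-c) with hd
      have hdd : d * (1 - c) = F s0 - c * s0 := by
        rw [hd]; field_simp
      have hMge : d + 1 ≤ M := le_max_right _ _
      have hb := hlin M hMs0'
      nlinarith [mul_nonneg (sub_nonneg.2 hMge) h1c.le]
  -- Existence of a fixed point by IVT on [σ², M]
  have hIccsub : Set.Icc (σ^2) M ⊆ Set.Ioi 0 := fun x hx => lt_of_lt_of_le hσ2 hx.1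
  have hgc : ContinuousOn (fun x => F x - x) (Set.Icc (σ^2) M) :=
    (hFcont.mono hIccsub).sub continuousOn_id
  obtain ⟨sfix, hsfixmem, hsfe⟩ :=
    intermediate_value_Icc' hMa.le hgc
      (show (0:ℝ) ∈ Set.Icc (F M - M) (F (σ^2) - σ^2) from
        ⟨by linarith, by have := hFlb _ hσ2; linarith⟩)
  have hsfixpos : 0 < sfix := lt_of_lt_of_le hσ2 hsfixmem.1
  have hfix : F sfix = sfix := by
    have h : F sfix - sfix = 0 := hsfe
    linarith
  -- Uniqueness
  have huniq : ∀ s, 0 < s → F s = s → s = sfix := by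
    intro s hs hfs
    rcases lt_trichotomy s sfix with h | h | h
    · exact (lemC s sfix hs h (by rw [hfs, hfix]) hfs.le).elim
    · exact h
    · exact (lemC sfix s hsfixpos h (by rw [hfs, hfix]) hfix.le).elim
  -- Strict behavior away from fixed point
  have hsml : ∀ s, 0 < s → s < sfix → s < F s := by
    intro s hs h
    by_contra hle
    push_neg at hle
    exact lemC s sfix hs h (by rw [hfix]; linarith) hle
  have hbig : ∀ s, sfix < s → F s < s := by
    intro s h
    by_contra hle
    push_neg at hle
    exact lemC sfix s hsfixpos h (by rw [hfix]; linarith) hfix.le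
  refine ⟨sfix, ⟨hsfixpos, hfix⟩, huniq, ?_⟩
  intro τ₀ hτ₀
  have hpos : ∀ t, 0 < F^[t] τ₀ := by
    intro t
    induction t with
    | zero => simpa using hτ₀
    | succ t ih =>
      rw [Function.iterate_succ_apply']
      exact lt_of_lt_of_le hσ2 (hFlb _ ih)
  rcases le_or_gt τ₀ sfix with hcase | hcase
  · -- increasing towards sfix
    have hub : ∀ t, F^[t] τ₀ ≤ sfix := by
      intro t
      induction t with
      | zero => simpa using hcase
      | succ t ih =>
        rw [Function.iterate_succ_apply']
        calc F (F^[t] τ₀) ≤ F sfix :=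
              hFmono (Set.mem_Ioi.2 (hpos t)) (Set.mem_Ioi.2 hsfixpos) ih
          _ = sfix := hfix
    have hmono : Monotone (fun t : ℕ => F^[t] τ₀) := by
      apply monotone_nat_of_le_succ
      intro t
      show F^[t] τ₀ ≤ F^[t+1] τ₀
      rw [Function.iterate_succ_apply']
      rcases lt_or_eq_of_le (hub t) with h | h
      · exact (hsml _ (hpos t) h).le
      · rw [h, hfix]
    have hbdd : BddAbove (Set.range fun t : ℕ => F^[t] τ₀) :=
      ⟨sfix, by rintro x ⟨t, rfl⟩; exact hub t⟩
    have htend := tendsto_atTop_ciSup hmono hbdd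
    set L := ⨆ t : ℕ, F^[t] τ₀ with hL
    have hLpos : 0 < L := by
      have h0 : τ₀ ≤ L := by simpa using le_ciSup hbdd 0
      linarith
    have hLfix : F L = L := by
      have hcL : ContinuousAt F L := hFcont.continuousAt (Ioi_mem_nhds hLpos)
      have h1 : Filter.Tendsto (fun t : ℕ => F^[t+1] τ₀) Filter.atTop (nhds L) :=
        htend.comp (Filter.tendsto_add_atTop_nat 1)
      have h2 : Filter.Tendsto (fun t : ℕ => F (F^[t] τ₀)) Filter.atTop (nhds (F L)) :=
        hcL.tendsto.comp htend
      have h3 : (fun t : ℕ => F (F^[t] τ₀)) = fun t : ℕ => F^[t+1] τ₀ := by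
        funext t; rw [Function.iterate_succ_apply']
      rw [h3] at h2
      exact tendsto_nhds_unique h2 h1
    rw [huniq L hLpos hLfix] at htend
    exact htend
  · -- decreasing towards sfix
    have hlb : ∀ t, sfix ≤ F^[t] τ₀ := by
      intro t
      induction t with
      | zero => simpa using hcase.le
      | succ t ih =>
        rw [Function.iterate_succ_apply']
        calc sfix = F sfix := hfix.symm
          _ ≤ F (F^[t] τ₀) :=
              hFmono (Set.mem_Ioi.2 hsfixpos) (Set.mem_Ioi.2 (hpos t)) ih
    have hanti : Antitone (fun t : ℕ => F^[t] τ₀) := by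
      apply antitone_nat_of_succ_le
      intro t
      show F^[t+1] τ₀ ≤ F^[t] τ₀
      rw [Function.iterate_succ_apply']
      rcases lt_or_eq_of_le (hlb t) with h | h
      · exact (hbig _ h).le
      · rw [← h, hfix]
    have hbdd : BddBelow (Set.range fun t : ℕ => F^[t] τ₀) :=
      ⟨sfix, by rintro x ⟨t, rfl⟩; exact hlb t⟩
    have htend := tendsto_atTop_ciInf hanti hbdd
    set L := ⨅ t : ℕ, F^[t] τ₀ with hL
    have hLpos : 0 < L := by
      have h0 : sfix ≤ L := le_ciInf hlb
      linarith
    have hLfix : F L = L := by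
      have hcL : ContinuousAt F L := hFcont.continuousAt (Ioi_mem_nhds hLpos)
      have h1 : Filter.Tendsto (fun t : ℕ => F^[t+1] τ₀) Filter.atTop (nhds L) :=
        htend.comp (Filter.tendsto_add_atTop_nat 1)
      have h2 : Filter.Tendsto (fun t : ℕ => F (F^[t] τ₀)) Filter.atTop (nhds (F L)) :=
        hcL.tendsto.comp htend
      have h3 : (fun t : ℕ => F (F^[t] τ₀)) = fun t : ℕ => F^[t+1] τ₀ := by
        funext t; rw [Function.iterate_succ_apply']
      rw [h3] at h2
      exact tendsto_nhds_unique h2 h1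
    rw [huniq L hLpos hLfix] at htend
    exact htend
end

section
/- Consider the rank-1 matrix completion problem: M ∈ ℝ^{m×n} with M_{ij} = uᵢvⱼ for unknown nonzero vectors u ∈ ℝᵐ, v ∈ ℝⁿ with all entries nonzero, and entries observed on a set E ⊆ [m]×[n]. If the bipartite graph G = ([m],[n],E) is connected, then the observed entries determine M uniquely: any pair (u',v') with u'ᵢv'ⱼ = uᵢvⱼ for all (i,j) ∈ E satisfies u'ᵢv'ⱼ = uᵢvⱼ for all (i,j) ∈ [m]×[n]. -/
/-- Rank-1 matrix completion: if the bipartite graph of observed entries is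
connected and the factors u, v have all entries nonzero, then the observed
entries uᵢvⱼ, (i,j) ∈ E, determine the whole matrix. -/
theorem rank_one_completion_unique {m n : ℕ} (E : Set (Fin m × Fin n))
    (u : Fin m → ℝ) (v : Fin n → ℝ)
    (hu : ∀ i, u i ≠ 0) (hv : ∀ j, v j ≠ 0)
    (G : SimpleGraph (Fin m ⊕ Fin n))
    (hG : ∀ a b, G.Adj a b ↔
      (∃ i j, a = Sum.inl i ∧ b = Sum.inr j ∧ (i, j) ∈ E) ∨
      (∃ i j, a = Sum.inr j ∧ b = Sum.inl i ∧ (i, j) ∈ E))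
    (hconn : G.Connected)
    (u' : Fin m → ℝ) (v' : Fin n → ℝ)
    (hobs : ∀ p ∈ E, u' p.1 * v' p.2 = u p.1 * v p.2) :
    ∀ i j, u' i * v' j = u i * v j := by
  intro i j
  classical
  set f : Fin m ⊕ Fin n → ℝ := fun a => match a with
    | Sum.inl i => u' i / u i
    | Sum.inr j => v j / v' j with hf
  -- f is constant along edges
  have key : ∀ i' j', (i', j') ∈ E → u' i' / u i' = v j' / v' j' := by
    intro i' j' hE
    have h := hobs _ hE
    have hv' : v' j' ≠ 0 := by
      intro h0
      exact mul_ne_zero (hu i') (hv j') (by rw [← h, h0, mul_zero])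
    rw [div_eq_div_iff (hu i') hv']
    simp only at h
    linarith [h]
  have hadj : ∀ a b, G.Adj a b → f a = f b := by
    intro a b hab
    rcases (hG a b).1 hab with ⟨i', j', rfl, rfl, hE⟩ | ⟨i', j', rfl, rfl, hE⟩
    · simpa only [hf] using key i' j' hE
    · simpa only [hf] using (key i' j' hE).symm
  have hwalk : ∀ a b : Fin m ⊕ Fin n, G.Reachable a b → f a = f b := by
    intro a b hr
    obtain ⟨w⟩ := hr
    induction w with
    | nil => rfl
    | cons h p ih => exact (hadj _ _ h).trans ih
  have hval : u' i / u i = v j / v' j :=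
    hwalk (Sum.inl i) (Sum.inr j) (hconn.preconnected _ _)
  -- v' j ≠ 0
  obtain ⟨w⟩ := hconn.preconnected (Sum.inr j) (Sum.inl i)
  have hv'j : v' j ≠ 0 := by
    cases w with
    | cons h p =>
      rcases (hG _ _).1 h with ⟨i', j', heq, _, hE⟩ | ⟨i', j', heq, _, hE⟩
      · exact absurd heq (by simp)
      · rw [Sum.inr.injEq] at heq
        subst heq
        have h := hobs _ hE
        intro h0
        exact mul_ne_zero (hu i') (hv j) (by simpa [h0] using h.symm)
  rw [div_eq_div_iff (hu i) hv'j] at hval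
  linarith
end
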